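/- In a fair division instance with matroid-rank valuations, if a social-welfare-maximizing partial allocation (A_1,…,A_n) satisfies the pairwise maximin share guarantee, then it is (1/(2n−1))-approximately MMS: v_i(A_i) ≥ μ_i(n,[m]) / (2n−1) for all agents i. -/

import Mathlib

/-!
Fix an agent `i` and put `t = rᵢ(Aᵢ)`. Welfare maximality forces `rᵢ` of everything not
held by the other agents to be `t`. PMMS gives
`rᵢ(Aᵢ ∪ Aⱼ) ≤ 2 μᵢ(2, Aᵢ ∪ Aⱼ) + 1 ≤ 2t + 1`, so by submodularity each further bundle `Aⱼ`
raises the rank by at most `t + 1`, whence `μᵢ(n, [m]) ≤ rᵢ([m]) ≤ nt + n - 1 ≤ (2n - 1) t`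
as soon as `t ≥ 1`.
For `t = 0` count nonloops instead: every `Aⱼ` contains at most one, so there are at most
`n - 1` of them, too few for an `n`-partition into parts of positive rank.
-/

structure FinMatroid (E : Type*) [Fintype E] [DecidableEq E] where
  Indep : Finset E → Prop
  empty_indep : Indep ∅
  subset_indep : ∀ ⦃I J : Finset E⦄, Indep I → J ⊆ I → Indep J
  aug : ∀ ⦃I J : Finset E⦄, Indep I → Indep J → I.card < J.card →
    ∃ g ∈ J \ I, Indep (insert g I)

noncomputable def FinMatroid.rank {E : Type*} [Fintype E] [DecidableEq E]
    (M : FinMatroid E) (S : Finset E) : ℕ :=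
  sSup {t | ∃ I : Finset E, I ⊆ S ∧ M.Indep I ∧ I.card = t}

/-- Maximin share `μ(k, S)` for a ℕ-valued valuation `v`: the maximum over
`k`-partitions `(Y 0, …, Y (k-1))` of `S` of `min_j v (Y j)`. -/
noncomputable def mmsN {E : Type*} [Fintype E] [DecidableEq E]
    (v : Finset E → ℕ) (k : ℕ) (S : Finset E) : ℕ :=
  sSup {t | ∃ Y : Fin k → Finset E,
    (∀ a b, a ≠ b → Disjoint (Y a) (Y b)) ∧ Finset.univ.biUnion Y = S ∧
    ∀ j, t ≤ v (Y j)}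

namespace FinMatroid

variable {E : Type*} [Fintype E] [DecidableEq E] (M : FinMatroid E)

lemma card_le_rank {I S : Finset E} (hIS : I ⊆ S) (hI : M.Indep I) :
    I.card ≤ M.rank S :=
  le_csSup ⟨S.card, fun _ ⟨_, hJS, _, hJc⟩ => hJc ▸ Finset.card_le_card hJS⟩ ⟨I, hIS, hI, rfl⟩

lemma exists_indep_card_eq_rank (S : Finset E) :
    ∃ I ⊆ S, M.Indep I ∧ I.card = M.rank S :=
  Nat.sSup_mem (s := {t | ∃ I ⊆ S, M.Indep I ∧ I.card = t})
    ⟨0, ∅, Finset.empty_subset S, M.empty_indep, Finset.card_empty⟩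
    ⟨S.card, fun _ ⟨_, hJS, _, hJc⟩ => hJc ▸ Finset.card_le_card hJS⟩

lemma rank_le_card (S : Finset E) : M.rank S ≤ S.card := by
  obtain ⟨I, hIS, -, hI⟩ := M.exists_indep_card_eq_rank S
  exact hI ▸ Finset.card_le_card hIS

lemma rank_mono {S T : Finset E} (h : S ⊆ T) : M.rank S ≤ M.rank T := by
  obtain ⟨I, hIS, hI, hIc⟩ := M.exists_indep_card_eq_rank S
  exact hIc ▸ M.card_le_rank (hIS.trans h) hI

lemma rank_eq_card_of_indep {I : Finset E} (hI : M.Indep I) : M.rank I = I.card :=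
  le_antisymm (M.rank_le_card I) (M.card_le_rank subset_rfl hI)

lemma exists_indep_superset_card_eq_rank {I S : Finset E} (hIS : I ⊆ S) (hI : M.Indep I) :
    ∃ J, I ⊆ J ∧ J ⊆ S ∧ M.Indep J ∧ J.card = M.rank S := by
  suffices ∀ k, ∀ I ⊆ S, M.Indep I → M.rank S ≤ I.card + k →
      ∃ J, I ⊆ J ∧ J ⊆ S ∧ M.Indep J ∧ J.card = M.rank S from
    this _ I hIS hI (Nat.le_add_left _ _)
  intro k
  induction k with
  | zero =>
    exact fun I hIS hI hle =>
      ⟨I, subset_rfl, hIS, hI, le_antisymm (M.card_le_rank hIS hI) hle⟩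
  | succ k ih =>
    intro I hIS hI hle
    by_cases hc : M.rank S ≤ I.card
    · exact ⟨I, subset_rfl, hIS, hI, le_antisymm (M.card_le_rank hIS hI) hc⟩
    obtain ⟨B, hBS, hB, hBc⟩ := M.exists_indep_card_eq_rank S
    obtain ⟨g, hg, hgI⟩ := M.aug hI hB (by omega)
    obtain ⟨hgB, hgnI⟩ := Finset.mem_sdiff.mp hg
    obtain ⟨J, hIJ, hJS, hJ, hJc⟩ := ih (insert g I) (Finset.insert_subset (hBS hgB) hIS) hgI
      (by rw [Finset.card_insert_of_notMem hgnI]; omega)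
    exact ⟨J, (Finset.subset_insert g I).trans hIJ, hJS, hJ, hJc⟩

lemma rank_union_add_rank_inter_le (X Y : Finset E) :
    M.rank (X ∪ Y) + M.rank (X ∩ Y) ≤ M.rank X + M.rank Y := by
  obtain ⟨I, hIXY, hI, hIc⟩ := M.exists_indep_card_eq_rank (X ∩ Y)
  obtain ⟨J, hIJ, hJXY, hJ, hJc⟩ :=
    M.exists_indep_superset_card_eq_rank (hIXY.trans Finset.inter_subset_union) hI
  have hJX := M.card_le_rank (Finset.inter_subset_right (s₁ := J) (s₂ := X))
    (M.subset_indep hJ Finset.inter_subset_left)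
  have hJY := M.card_le_rank (Finset.inter_subset_right (s₁ := J) (s₂ := Y))
    (M.subset_indep hJ Finset.inter_subset_left)
  have hI_le : I.card ≤ (J ∩ (X ∩ Y)).card :=
    Finset.card_le_card (Finset.subset_inter hIJ hIXY)
  have hsplit : (J ∩ X).card + (J ∩ Y).card = (J ∩ (X ∪ Y)).card + (J ∩ (X ∩ Y)).card := by
    rw [Finset.inter_union_distrib_left, Finset.inter_inter_distrib_left]
    exact (Finset.card_union_add_card_inter _ _).symm
  rw [Finset.inter_eq_left.mpr hJXY] at hsplit
  omega

section Nonloops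

open Classical

noncomputable def nonloops (S : Finset E) : Finset E := S.filter fun x => M.Indep {x}

lemma mem_nonloops {x : E} {S : Finset E} : x ∈ M.nonloops S ↔ x ∈ S ∧ M.Indep {x} :=
  Finset.mem_filter

lemma nonloops_mono {S T : Finset E} (h : S ⊆ T) : M.nonloops S ⊆ M.nonloops T :=
  Finset.filter_subset_filter _ h

lemma nonloops_nonempty_iff {S : Finset E} : (M.nonloops S).Nonempty ↔ 0 < M.rank S := by
  constructor
  · rintro ⟨x, hx⟩
    obtain ⟨hxS, hx⟩ := Finset.mem_filter.mp hx
    exact M.card_le_rank (Finset.singleton_subset_iff.mpr hxS) hx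
  · intro h
    obtain ⟨I, hIS, hI, hIc⟩ := M.exists_indep_card_eq_rank S
    obtain ⟨x, hx⟩ := Finset.card_pos.mp (hIc ▸ h)
    exact ⟨x, Finset.mem_filter.mpr
      ⟨hIS hx, M.subset_indep hI (Finset.singleton_subset_iff.mpr hx)⟩⟩

lemma nonloops_union (S T : Finset E) : M.nonloops (S ∪ T) = M.nonloops S ∪ M.nonloops T :=
  Finset.filter_union _ _ _

lemma nonloops_biUnion {ι : Type*} (s : Finset ι) (Z : ι → Finset E) :
    M.nonloops (s.biUnion Z) = s.biUnion fun j => M.nonloops (Z j) :=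
  Finset.filter_biUnion _ _ _

end Nonloops

lemma rank_union_biUnion_add_le {ι : Type*} [DecidableEq ι] {B X : Finset E}
    {Z : ι → Finset E} {s : Finset ι} (hBX : B ⊆ X) (hBZ : ∀ j ∈ s, B ⊆ Z j) :
    M.rank (X ∪ s.biUnion Z) + s.card * M.rank B ≤ M.rank X + ∑ j ∈ s, M.rank (Z j) := by
  induction s using Finset.induction_on with
  | empty => simp
  | @insert j s hjs ih =>
    have ih := ih fun k hk => hBZ k (Finset.mem_insert_of_mem hk)
    have hsub := M.rank_union_add_rank_inter_le (X ∪ s.biUnion Z) (Z j)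
    have hB : M.rank B ≤ M.rank ((X ∪ s.biUnion Z) ∩ Z j) :=
      M.rank_mono (Finset.subset_inter (hBX.trans Finset.subset_union_left)
        (hBZ j (Finset.mem_insert_self j s)))
    have hunion : X ∪ s.biUnion Z ∪ Z j = X ∪ (insert j s).biUnion Z := by
      rw [Finset.biUnion_insert, Finset.union_comm (Z j), Finset.union_assoc]
    rw [hunion] at hsub
    rw [Finset.sum_insert hjs, Finset.card_insert_of_notMem hjs]
    nlinarith

end FinMatroid

section MaximinShare

variable {E : Type*} [Fintype E] [DecidableEq E]

lemma mmsN_le {v : Finset E → ℕ} {k t : ℕ} {S : Finset E}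
    (h : ∀ Y : Fin k → Finset E, (∀ a b, a ≠ b → Disjoint (Y a) (Y b)) →
      Finset.univ.biUnion Y = S → ∃ j, v (Y j) ≤ t) :
    mmsN v k S ≤ t :=
  csSup_le' fun _ ⟨Y, hd, hu, hY⟩ => (h Y hd hu).elim fun j hj => (hY j).trans hj

lemma exists_partition_of_pos_mmsN {v : Finset E → ℕ} {k : ℕ} {S : Finset E}
    (h : 0 < mmsN v k S) :
    ∃ Y : Fin k → Finset E, (∀ a b, a ≠ b → Disjoint (Y a) (Y b)) ∧
      Finset.univ.biUnion Y = S ∧ ∀ j, 0 < v (Y j) := by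
  obtain ⟨t, ⟨Y, hd, hu, hY⟩, ht⟩ := exists_lt_of_lt_csSup' h
  exact ⟨Y, hd, hu, fun j => ht.trans_le (hY j)⟩

namespace FinMatroid

variable (M : FinMatroid E)

lemma le_mmsN {k t : ℕ} {S : Finset E} (hk : 0 < k) (Y : Fin k → Finset E)
    (hd : ∀ a b, a ≠ b → Disjoint (Y a) (Y b)) (hu : Finset.univ.biUnion Y = S)
    (ht : ∀ j, t ≤ M.rank (Y j)) : t ≤ mmsN M.rank k S :=
  le_csSup ⟨Fintype.card E, fun _ ⟨_, _, _, hZ⟩ =>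
    (hZ ⟨0, hk⟩).trans ((M.rank_le_card _).trans (Finset.card_le_univ _))⟩ ⟨Y, hd, hu, ht⟩

lemma le_mmsN_two {t : ℕ} {S Y₀ Y₁ : Finset E} (hd : Disjoint Y₀ Y₁) (hu : Y₀ ∪ Y₁ = S)
    (h₀ : t ≤ M.rank Y₀) (h₁ : t ≤ M.rank Y₁) : t ≤ mmsN M.rank 2 S := by
  refine M.le_mmsN two_pos ![Y₀, Y₁] ?_ ?_ ?_
  · intro a b hab
    fin_cases a <;> fin_cases b <;> simp_all [disjoint_comm]
  · rw [show (Finset.univ : Finset (Fin 2)) = {0, 1} from rfl]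
    simp [hu]
  · intro j
    fin_cases j <;> assumption

lemma mmsN_le_rank {k : ℕ} (hk : 0 < k) (S : Finset E) : mmsN M.rank k S ≤ M.rank S :=
  mmsN_le fun Y _ hu =>
    ⟨⟨0, hk⟩, M.rank_mono (hu ▸ Finset.subset_biUnion_of_mem Y (Finset.mem_univ _))⟩

/-- Halving a basis of `S` gives a 2-partition of `S` whose parts have rank at least
`⌊rank S / 2⌋`. -/
lemma rank_le_two_mul_mmsN_two_add_one (S : Finset E) :
    M.rank S ≤ 2 * mmsN M.rank 2 S + 1 := by
  obtain ⟨B, hBS, hB, hBc⟩ := M.exists_indep_card_eq_rank S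
  obtain ⟨B₁, hB₁B, hB₁c⟩ := Finset.exists_subset_card_eq (Nat.div_le_self B.card 2)
  have hB₁ : B₁ ⊆ S \ (B \ B₁) := fun x hx =>
    Finset.mem_sdiff.mpr ⟨hBS (hB₁B hx), fun h => (Finset.mem_sdiff.mp h).2 hx⟩
  have hhalf : B.card / 2 ≤ mmsN M.rank 2 S := by
    refine M.le_mmsN_two (Y₀ := S \ (B \ B₁)) (Y₁ := B \ B₁) Finset.sdiff_disjoint
      (Finset.sdiff_union_of_subset (Finset.sdiff_subset.trans hBS)) ?_ ?_
    · exact hB₁c ▸ M.card_le_rank hB₁ (M.subset_indep hB hB₁B)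
    · rw [M.rank_eq_card_of_indep (M.subset_indep hB Finset.sdiff_subset),
        Finset.card_sdiff_of_subset hB₁B, hB₁c]
      omega
  omega

lemma le_card_nonloops_of_pos_mmsN {k : ℕ} {S : Finset E} (h : 0 < mmsN M.rank k S) :
    k ≤ (M.nonloops S).card := by
  obtain ⟨Y, hd, hu, hY⟩ := exists_partition_of_pos_mmsN h
  choose x hx using fun j => (M.nonloops_nonempty_iff).mpr (hY j)
  have hinj : Function.Injective x := fun a b hab => by
    by_contra hne
    exact Finset.disjoint_left.mp (hd a b hne) ((M.mem_nonloops.mp (hx a)).1)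
      (hab ▸ (M.mem_nonloops.mp (hx b)).1)
  have himage : Finset.univ.image x ⊆ M.nonloops S := by
    intro z hz
    obtain ⟨j, -, rfl⟩ := Finset.mem_image.mp hz
    exact M.nonloops_mono (hu ▸ Finset.subset_biUnion_of_mem Y (Finset.mem_univ j)) (hx j)
  simpa [Finset.card_image_of_injective _ hinj] using Finset.card_le_card himage

lemma card_nonloops_le_one_of_mmsN_two_eq_zero {S : Finset E} (h : mmsN M.rank 2 S = 0) :
    (M.nonloops S).card ≤ 1 := by
  by_contra! hlt
  obtain ⟨x, hx, y, hy, hxy⟩ := Finset.one_lt_card.mp hlt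
  obtain ⟨hxS, hxI⟩ := M.mem_nonloops.mp hx
  obtain ⟨hyS, hyI⟩ := M.mem_nonloops.mp hy
  have hpos : 0 < mmsN M.rank 2 S := by
    refine M.le_mmsN_two Finset.sdiff_disjoint
      (Finset.sdiff_union_of_subset (Finset.singleton_subset_iff.mpr hyS)) ?_ ?_
    · exact (M.nonloops_nonempty_iff).mp
        ⟨x, M.mem_nonloops.mpr ⟨Finset.mem_sdiff.mpr ⟨hxS, by simpa using hxy⟩, hxI⟩⟩
    · exact (M.nonloops_nonempty_iff).mp
        ⟨y, M.mem_nonloops.mpr ⟨Finset.mem_singleton_self y, hyI⟩⟩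
  omega

end FinMatroid

end MaximinShare

section Allocation

variable {E ι : Type*} [Fintype E] [DecidableEq E] [Fintype ι] [DecidableEq ι]

def notHeldByOthers (A : ι → Finset E) (i : ι) : Finset E :=
  Finset.univ \ (Finset.univ.erase i).biUnion A

lemma notHeldByOthers_union_biUnion_erase (A : ι → Finset E) (i : ι) :
    notHeldByOthers A i ∪ (Finset.univ.erase i).biUnion A = Finset.univ :=
  Finset.sdiff_union_of_subset (Finset.subset_univ _)

lemma disjoint_notHeldByOthers {A : ι → Finset E} {i j : ι} (hj : j ≠ i) :
    Disjoint (notHeldByOthers A i) (A j) :=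
  Finset.sdiff_disjoint.mono_right
    (Finset.subset_biUnion_of_mem A (Finset.mem_erase.mpr ⟨hj, Finset.mem_univ j⟩))

lemma subset_notHeldByOthers {A : ι → Finset E} (hdisj : ∀ a b, a ≠ b → Disjoint (A a) (A b))
    (i : ι) : A i ⊆ notHeldByOthers A i := by
  intro x hx
  refine Finset.mem_sdiff.mpr ⟨Finset.mem_univ x, fun hx' => ?_⟩
  obtain ⟨j, hj, hxj⟩ := Finset.mem_biUnion.mp hx'
  exact Finset.disjoint_left.mp (hdisj i j (Finset.ne_of_mem_erase hj).symm) hx hxj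

/-- Handing agent `i` everything the other agents do not hold is again an allocation of all
goods, so a welfare-maximal allocation cannot gain from it. -/
lemma apply_notHeldByOthers_le_of_sum_le {v : ι → Finset E → ℕ} {A : ι → Finset E}
    (hdisj : ∀ a b, a ≠ b → Disjoint (A a) (A b))
    (hmax : ∀ B : ι → Finset E, (∀ a b, a ≠ b → Disjoint (B a) (B b)) →
      Finset.univ.biUnion B = Finset.univ → ∑ k, v k (B k) ≤ ∑ k, v k (A k))
    (i : ι) : v i (notHeldByOthers A i) ≤ v i (A i) := by
  set B := Function.update A i (notHeldByOthers A i)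
  have hBdisj : ∀ a b, a ≠ b → Disjoint (B a) (B b) := by
    intro a b hab
    rcases eq_or_ne a i with rfl | ha
    · simpa [B, Function.update_of_ne hab.symm] using disjoint_notHeldByOthers hab.symm
    rcases eq_or_ne b i with rfl | hb
    · simpa [B, Function.update_of_ne ha] using (disjoint_notHeldByOthers ha).symm
    · simpa [B, Function.update_of_ne ha, Function.update_of_ne hb] using hdisj a b hab
  have hBcover : Finset.univ.biUnion B = Finset.univ := by
    refine Finset.eq_univ_of_forall fun x => ?_
    rcases Finset.mem_union.mp (notHeldByOthers_union_biUnion_erase A i ▸ Finset.mem_univ x)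
      with hx | hx
    · exact Finset.mem_biUnion.mpr ⟨i, Finset.mem_univ i, by simpa [B] using hx⟩
    · obtain ⟨j, hj, hxj⟩ := Finset.mem_biUnion.mp hx
      exact Finset.mem_biUnion.mpr ⟨j, Finset.mem_univ j,
        by simpa [B, Function.update_of_ne (Finset.ne_of_mem_erase hj)] using hxj⟩
  have h := hmax B hBdisj hBcover
  simp only [B, Function.apply_update (fun k => v k),
    Finset.sum_update_of_mem (Finset.mem_univ i)] at h
  rw [← Finset.add_sum_erase _ _ (Finset.mem_univ i), ← Finset.sdiff_singleton_eq_erase] at h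
  omega

end Allocation

namespace FinMatroid

variable {E ι : Type*} [Fintype E] [DecidableEq E] [Fintype ι] [DecidableEq ι]
  (M : FinMatroid E)

lemma mmsN_eq_zero_of_pmms (A : ι → Finset E) (i : ι) {X : Finset E}
    (hcover : X ∪ (Finset.univ.erase i).biUnion A = Finset.univ) (hX : M.rank X = 0)
    (hpmms : ∀ j, mmsN M.rank 2 (A i ∪ A j) = 0) :
    mmsN M.rank (Fintype.card ι) Finset.univ = 0 := by
  by_contra! hpos
  have hlower := M.le_card_nonloops_of_pos_mmsN (Nat.pos_of_ne_zero hpos)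
  have hX' : M.nonloops X = ∅ :=
    Finset.not_nonempty_iff_eq_empty.mp fun h => by
      simpa [hX] using (M.nonloops_nonempty_iff).mp h
  have hA : ∀ j, (M.nonloops (A j)).card ≤ 1 := fun j =>
    (Finset.card_le_card (M.nonloops_mono Finset.subset_union_right)).trans
      (M.card_nonloops_le_one_of_mmsN_two_eq_zero (hpmms j))
  have hupper : (M.nonloops Finset.univ).card ≤ Fintype.card ι - 1 := by
    rw [← hcover, nonloops_union, nonloops_biUnion, hX', Finset.empty_union]
    calc _ ≤ ∑ j ∈ Finset.univ.erase i, (M.nonloops (A j)).card := Finset.card_biUnion_le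
      _ ≤ ∑ _j ∈ Finset.univ.erase i, 1 := Finset.sum_le_sum fun j _ => hA j
      _ = Fintype.card ι - 1 := by simp [Finset.card_erase_of_mem]
  have := Fintype.card_pos_iff.mpr ⟨i⟩
  omega

lemma mmsN_le_of_pmms_of_pos (A : ι → Finset E) (i : ι) {X : Finset E} (hAX : A i ⊆ X)
    (hcover : X ∪ (Finset.univ.erase i).biUnion A = Finset.univ)
    (hX : M.rank X ≤ M.rank (A i)) (hpmms : ∀ j, mmsN M.rank 2 (A i ∪ A j) ≤ M.rank (A i))
    (hpos : 0 < M.rank (A i)) :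
    mmsN M.rank (Fintype.card ι) Finset.univ ≤ (2 * Fintype.card ι - 1) * M.rank (A i) := by
  set t := M.rank (A i)
  obtain ⟨a, ha⟩ : ∃ a, Fintype.card ι = a + 1 :=
    Nat.exists_eq_add_one.mpr (Fintype.card_pos_iff.mpr ⟨i⟩)
  have hcard : (Finset.univ.erase i).card = a := by
    rw [Finset.card_erase_of_mem (Finset.mem_univ i), Finset.card_univ, ha, Nat.add_sub_cancel]
  have hpair : ∀ j, M.rank (A i ∪ A j) ≤ 2 * t + 1 := fun j =>
    (M.rank_le_two_mul_mmsN_two_add_one _).trans (by have := hpmms j; omega)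
  have htel := M.rank_union_biUnion_add_le (Z := fun j => A i ∪ A j)
    (s := Finset.univ.erase i) hAX fun j _ => Finset.subset_union_left
  have hsum : ∑ j ∈ Finset.univ.erase i, M.rank (A i ∪ A j) ≤ a * (2 * t + 1) := by
    simpa [hcard] using Finset.sum_le_sum fun j (_ : j ∈ Finset.univ.erase i) => hpair j
  have huniv :
      M.rank Finset.univ ≤ M.rank (X ∪ (Finset.univ.erase i).biUnion fun j => A i ∪ A j) :=
    M.rank_mono <| hcover ▸ Finset.union_subset_union subset_rfl
      (Finset.biUnion_mono fun j _ => Finset.subset_union_right)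
  have hmms := M.mmsN_le_rank (k := Fintype.card ι) (by omega) Finset.univ
  rw [hcard] at htel
  rw [ha] at hmms
  rw [ha, show 2 * (a + 1) - 1 = 2 * a + 1 by omega]
  nlinarith

end FinMatroid

theorem stmt14_general {n m : ℕ} (Ms : Fin n → FinMatroid (Fin m))
    (A : Fin n → Finset (Fin m))
    (hdisj : ∀ a b, a ≠ b → Disjoint (A a) (A b))
    (hswmax : ∀ B : Fin n → Finset (Fin m),
      (∀ a b, a ≠ b → Disjoint (B a) (B b)) → Finset.univ.biUnion B = Finset.univ →
      ∑ k, (Ms k).rank (B k) ≤ ∑ k, (Ms k).rank (A k))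
    (hpmms : ∀ i j, mmsN (Ms i).rank 2 (A i ∪ A j) ≤ (Ms i).rank (A i)) :
    ∀ i, (mmsN (Ms i).rank n Finset.univ : ℝ) / (2 * n - 1) ≤ ((Ms i).rank (A i) : ℝ) := by
  intro i
  have hcover := notHeldByOthers_union_biUnion_erase A i
  have hX := apply_notHeldByOthers_le_of_sum_le (v := fun k => (Ms k).rank) hdisj hswmax i
  have key : mmsN (Ms i).rank n Finset.univ ≤ (2 * n - 1) * (Ms i).rank (A i) := by
    rcases Nat.eq_zero_or_pos ((Ms i).rank (A i)) with h0 | hpos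
    · simpa [h0] using ((Ms i).mmsN_eq_zero_of_pmms A i hcover (by omega)
        fun j => by have := hpmms i j; omega).le
    · simpa using (Ms i).mmsN_le_of_pmms_of_pos A i (subset_notHeldByOthers hdisj i) hcover hX
        (hpmms i) hpos
  have hn : 1 ≤ n := i.pos
  rw [div_le_iff₀ (by rify at hn; linarith)]
  calc (mmsN (Ms i).rank n Finset.univ : ℝ)
      ≤ ((2 * n - 1 : ℕ) : ℝ) * (Ms i).rank (A i) := by exact_mod_cast key
    _ = (Ms i).rank (A i) * (2 * n - 1) := by
        rw [Nat.cast_sub (by omega), mul_comm]; push_cast; ring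

/-- A social-welfare-maximizing PMMS partial allocation is `1/(2n−1)`-approximately
MMS. -/
theorem stmt14 {n m : ℕ} (hn : 1 ≤ n) (Ms : Fin n → FinMatroid (Fin m))
    (A : Fin n → Finset (Fin m))
    (hdisj : ∀ a b, a ≠ b → Disjoint (A a) (A b))
    (hswmax : ∀ B : Fin n → Finset (Fin m),
      (∀ a b, a ≠ b → Disjoint (B a) (B b)) → Finset.univ.biUnion B = Finset.univ →
      ∑ k, (Ms k).rank (B k) ≤ ∑ k, (Ms k).rank (A k))
    (hpmms : ∀ i j, mmsN (Ms i).rank 2 (A i ∪ A j) ≤ (Ms i).rank (A i)) :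
    ∀ i, (mmsN (Ms i).rank n Finset.univ : ℝ) / (2 * n - 1) ≤ ((Ms i).rank (A i) : ℝ) :=
  stmt14_general Ms A hdisj hswmax hpmms
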